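/- arXiv:1706.01353 — 2 statements merged into one kernel-verified Lean document; each statement's English description precedes it below -/
import Mathlib

section
/- Let d ≥ 2, C > 0, ν ∈ (0,1], and 0 < δ ≤ 1. Then there exists a constant C' depending only on d and C such that ∫_{|x|≤δ} ∫_{|y|≤δ} dx dy / ((x·y)² + (Cν)²) ≤ C' δ^{2d-2} / ν, where x, y ∈ ℝ^d. -/
/-!
Rotating `x` onto the first axis and enlarging the ball to the cube `[-δ, δ]ᵈ`, the inner
integral is at most `(2δ)^(d-1) ∫_ℝ dt / ((‖x‖ t)² + (Cν)²) = (2δ)^(d-1) π / (Cν ‖x‖)`.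
For `d ≥ 2` the weight `‖x‖⁻¹` is integrable near the origin, and polar coordinates give
`∫_{|x| ≤ δ} ‖x‖⁻¹ dx = d |B₁| δ^(d-1) / (d-1)`; the two factors `δ^(d-1)` make `δ^(2d-2)`.
-/

open MeasureTheory Real Set

theorem setIntegral_one_div_mul_sq_add_sq_le {a b : ℝ} (ha : 0 < a) (hb : 0 < b) (s : Set ℝ) :
    ∫ t in s, 1 / ((b * t) ^ 2 + a ^ 2) ≤ π / (a * b) := by
  have h : (fun t : ℝ => 1 / ((b * t) ^ 2 + a ^ 2)) =
      fun t => (a ^ 2)⁻¹ * (1 + (b / a * t) ^ 2)⁻¹ := by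
    ext t; field_simp; ring
  have hint : Integrable fun t : ℝ => 1 / ((b * t) ^ 2 + a ^ 2) := by
    rw [h]; exact (integrable_inv_one_add_sq.comp_mul_left' (by positivity)).const_mul _
  calc ∫ t in s, 1 / ((b * t) ^ 2 + a ^ 2)
      ≤ ∫ t, 1 / ((b * t) ^ 2 + a ^ 2) :=
        setIntegral_le_integral hint (.of_forall fun t => by positivity)
    _ = π / (a * b) := by
        rw [h, integral_const_mul, Measure.integral_comp_mul_left (fun t => (1 + t ^ 2)⁻¹),
          integral_univ_inv_one_add_sq, smul_eq_mul, abs_of_pos (by positivity)]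
        field_simp

theorem setIntegral_closedBall_comp_inner_eq_of_norm_eq {E F : Type*}
    [NormedAddCommGroup E] [InnerProductSpace ℝ E] [FiniteDimensional ℝ E]
    [MeasurableSpace E] [BorelSpace E] [NormedAddCommGroup F] [NormedSpace ℝ F]
    {u v : E} (huv : ‖u‖ = ‖v‖) (f : ℝ → F) (r : ℝ) :
    ∫ y in Metric.closedBall 0 r, f (inner ℝ u y) =
      ∫ y in Metric.closedBall 0 r, f (inner ℝ v y) := by
  set R := Submodule.reflection (ℝ ∙ (u - v))ᗮ
  have hRu : R u = v := Submodule.reflection_sub huv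
  have hball : R ⁻¹' Metric.closedBall 0 r = Metric.closedBall 0 r := by
    ext y; simp
  have hR : MeasurableEmbedding R := R.toHomeomorph.measurableEmbedding
  have hchange := R.measurePreserving.setIntegral_preimage_emb hR (fun y => f (inner ℝ u y))
    (Metric.closedBall 0 r)
  rw [hball] at hchange
  rw [← hchange]
  refine setIntegral_congr_fun measurableSet_closedBall fun y _ => ?_
  rw [← hRu, ← R.inner_map_map, Submodule.reflection_reflection]

theorem setIntegral_univ_pi_comp_eval {ι α E : Type*} [Fintype ι] [DecidableEq ι]
    [MeasureSpace α] [SigmaFinite (volume : Measure α)]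
    [NormedAddCommGroup E] [NormedSpace ℝ E] (i : ι) {g : α → E} (hg : StronglyMeasurable g)
    (s : Set α) :
    ∫ z in univ.pi (fun _ : ι => s), g (z i) =
      volume.real s ^ (Fintype.card ι - 1) • ∫ t in s, g t := by
  rw [volume_pi, Measure.restrict_pi_pi,
    ← integral_map_of_stronglyMeasurable (measurable_pi_apply i) hg, Measure.pi_map_eval,
    integral_smul_measure]
  simp [Finset.prod_const, Finset.card_erase_of_mem, measureReal_def]

theorem setIntegral_closedBall_comp_eval_le {ι : Type*} [Fintype ι] (i : ι) {g : ℝ → ℝ}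
    (hg : Continuous g) (hg0 : 0 ≤ g) {δ : ℝ} (hδ : 0 ≤ δ) :
    ∫ y in Metric.closedBall (0 : EuclideanSpace ℝ ι) δ, g (y i) ≤
      (2 * δ) ^ (Fintype.card ι - 1) * ∫ t in Icc (-δ) δ, g t := by
  classical
  have hchange := (PiLp.volume_preserving_toLp ι).setIntegral_preimage_emb
    (MeasurableEquiv.toLp 2 (ι → ℝ)).measurableEmbedding (fun y => g (y i))
    (Metric.closedBall 0 δ)
  have hcube : WithLp.toLp 2 ⁻¹' Metric.closedBall (0 : EuclideanSpace ℝ ι) δ ⊆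
      univ.pi fun _ => Icc (-δ) δ := fun z hz j _ =>
    abs_le.1 ((PiLp.norm_apply_le (WithLp.toLp 2 z) j).trans (mem_closedBall_zero_iff.1 hz))
  rw [← hchange]
  calc ∫ z in WithLp.toLp 2 ⁻¹' Metric.closedBall (0 : EuclideanSpace ℝ ι) δ, g (z i)
      ≤ ∫ z in univ.pi fun _ : ι => Icc (-δ) δ, g (z i) :=
        setIntegral_mono_set ((hg.comp (continuous_apply i)).continuousOn.integrableOn_compact
          (isCompact_univ_pi fun _ => isCompact_Icc)) (.of_forall fun z => hg0 _)
          hcube.eventuallyLE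
    _ = (2 * δ) ^ (Fintype.card ι - 1) * ∫ t in Icc (-δ) δ, g t := by
        rw [setIntegral_univ_pi_comp_eval i hg.stronglyMeasurable, Real.volume_real_Icc_of_le
          (by linarith), smul_eq_mul, sub_neg_eq_add, ← two_mul]

theorem setIntegral_closedBall_one_div_inner_sq_add_sq_le {ι : Type*} [Fintype ι] {a δ : ℝ}
    (ha : 0 < a) (hδ : 0 ≤ δ) {x : EuclideanSpace ℝ ι} (hx : x ≠ 0) :
    ∫ y in Metric.closedBall (0 : EuclideanSpace ℝ ι) δ, 1 / (inner ℝ x y ^ 2 + a ^ 2) ≤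
      π / (a * ‖x‖) * (2 * δ) ^ (Fintype.card ι - 1) := by
  classical
  obtain ⟨i⟩ : Nonempty ι := by
    by_contra h
    rw [not_nonempty_iff] at h
    exact hx (Subsingleton.elim _ _)
  have hxpos : 0 < ‖x‖ := norm_pos_iff.2 hx
  have hnorm : ‖x‖ = ‖‖x‖ • EuclideanSpace.single i (1 : ℝ)‖ := by
    simp [norm_smul]
  rw [setIntegral_closedBall_comp_inner_eq_of_norm_eq hnorm (fun t => 1 / (t ^ 2 + a ^ 2))]
  simp only [real_inner_smul_left, EuclideanSpace.inner_single_left, map_one, one_mul]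
  calc ∫ y in Metric.closedBall (0 : EuclideanSpace ℝ ι) δ, 1 / ((‖x‖ * y i) ^ 2 + a ^ 2)
      ≤ (2 * δ) ^ (Fintype.card ι - 1) * ∫ t in Icc (-δ) δ, 1 / ((‖x‖ * t) ^ 2 + a ^ 2) :=
        setIntegral_closedBall_comp_eval_le i (g := fun t => 1 / ((‖x‖ * t) ^ 2 + a ^ 2))
          (continuous_const.div (by fun_prop) fun t => by positivity) (fun t => by positivity) hδ
    _ ≤ (2 * δ) ^ (Fintype.card ι - 1) * (π / (a * ‖x‖)) := by
        gcongr
        exact setIntegral_one_div_mul_sq_add_sq_le ha hxpos _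
    _ = π / (a * ‖x‖) * (2 * δ) ^ (Fintype.card ι - 1) := mul_comm _ _

section InverseNorm

variable {E : Type*} [NormedAddCommGroup E] [NormedSpace ℝ E] [FiniteDimensional ℝ E]
  [MeasurableSpace E] [BorelSpace E] (μ : Measure E) [μ.IsAddHaarMeasure]

theorem integrableOn_inv_norm_closedBall (hE : 2 ≤ Module.finrank ℝ E) (r : ℝ) :
    IntegrableOn (fun x : E => ‖x‖⁻¹) (Metric.closedBall 0 r) μ := by
  refine (integrableOn_ball_of_norm_le_rpow (r := r + 1) (C := 1) (α := 1) (by omega)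
    (by exact_mod_cast hE) (.of_forall fun x => ?_)
    measurable_norm.inv.aestronglyMeasurable).mono_set
    (Metric.closedBall_subset_ball (lt_add_one r))
  simp [Real.rpow_neg_one]

theorem integral_inv_norm_closedBall (hE : 2 ≤ Module.finrank ℝ E) {r : ℝ} (hr : 0 ≤ r) :
    ∫ x in Metric.closedBall 0 r, ‖x‖⁻¹ ∂μ =
      Module.finrank ℝ E * μ.real (Metric.ball 0 1) *
        (r ^ (Module.finrank ℝ E - 1) / (Module.finrank ℝ E - 1)) := by
  have : Nontrivial E := Module.nontrivial_of_finrank_pos (R := ℝ) (by omega)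
  obtain ⟨n, hn⟩ : ∃ n, Module.finrank ℝ E = n + 2 := ⟨_, (Nat.sub_add_cancel hE).symm⟩
  have hind : (Metric.closedBall (0 : E) r).indicator (fun x => ‖x‖⁻¹) =
      fun x => (Iic r).indicator (·⁻¹) ‖x‖ := by
    ext x; simp only [indicator, mem_closedBall_zero_iff, mem_Iic]
  have hradial : ∫ y in Ioi (0 : ℝ), y ^ (n + 1) • (Iic r).indicator (·⁻¹) y =
      r ^ (n + 1) / (n + 1) := by
    rw [← indicator_smul (Iic r) (fun y : ℝ => y ^ (n + 1)) (·⁻¹),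
      setIntegral_indicator measurableSet_Iic, Ioi_inter_Iic,
      setIntegral_congr_fun measurableSet_Ioc (g := fun y : ℝ => y ^ n) fun y hy => by
        simp [pow_succ, hy.1.ne'],
      ← intervalIntegral.integral_of_le hr, integral_pow]
    simp
  rw [← integral_indicator measurableSet_closedBall, hind, integral_fun_norm_addHaar, hn,
    show n + 2 - 1 = n + 1 from rfl, hradial]
  rw [nsmul_eq_mul, smul_eq_mul]
  push_cast
  ring

end InverseNorm

theorem setIntegral_setIntegral_one_div_inner_sq_add_sq_le {ι : Type*} [Fintype ι]
    (hι : 2 ≤ Fintype.card ι) {a δ : ℝ} (ha : 0 < a) (hδ : 0 ≤ δ) :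
    ∫ x in Metric.closedBall (0 : EuclideanSpace ℝ ι) δ,
        ∫ y in Metric.closedBall (0 : EuclideanSpace ℝ ι) δ, 1 / (inner ℝ x y ^ 2 + a ^ 2) ≤
      π / a * (2 * δ) ^ (Fintype.card ι - 1) *
        ∫ x in Metric.closedBall (0 : EuclideanSpace ℝ ι) δ, ‖x‖⁻¹ := by
  rw [← integral_const_mul]
  refine integral_mono_of_nonneg (.of_forall fun x => integral_nonneg fun y => by positivity)
    ((integrableOn_inv_norm_closedBall volume (by rwa [finrank_euclideanSpace]) δ).const_mul _) ?_
  have : Nontrivial (EuclideanSpace ℝ ι) :=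
    Module.nontrivial_of_finrank_pos (R := ℝ) (by rw [finrank_euclideanSpace]; omega)
  have hne : ∀ᵐ x : EuclideanSpace ℝ ι, x ≠ 0 := compl_mem_ae_iff.2 (measure_singleton 0)
  filter_upwards [ae_restrict_of_ae hne] with x hx
  calc _ ≤ π / (a * ‖x‖) * (2 * δ) ^ (Fintype.card ι - 1) :=
        setIntegral_closedBall_one_div_inner_sq_add_sq_le ha hδ hx
    _ = π / a * (2 * δ) ^ (Fintype.card ι - 1) * ‖x‖⁻¹ := by
        field_simp

/-- For `d ≥ 2`, `C > 0`, there is a constant `C'` depending only on `d` and `C`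
such that for all `ν ∈ (0,1]` and `0 < δ ≤ 1`,
`∫_{|x|≤δ} ∫_{|y|≤δ} dx dy / ((x·y)² + (Cν)²) ≤ C' δ^{2d-2} / ν`. -/
theorem near_singularity_bound (d : ℕ) (hd : 2 ≤ d) (C : ℝ) (hC : 0 < C) :
    ∃ C' > (0:ℝ), ∀ ν : ℝ, ν ∈ Set.Ioc (0:ℝ) 1 → ∀ δ : ℝ, 0 < δ → δ ≤ 1 →
      (∫ x in Metric.closedBall (0 : EuclideanSpace ℝ (Fin d)) δ,
        ∫ y in Metric.closedBall (0 : EuclideanSpace ℝ (Fin d)) δ,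
          1 / ((inner ℝ x y : ℝ) ^ 2 + (C * ν) ^ 2))
        ≤ C' * δ ^ (2 * d - 2) / ν := by
  set V := volume.real (Metric.ball (0 : EuclideanSpace ℝ (Fin d)) 1) with hVdef
  have hV : 0 < V :=
    ENNReal.toReal_pos (Metric.measure_ball_pos _ _ one_pos).ne' measure_ball_lt_top.ne
  have hd1 : (0 : ℝ) < d - 1 := by
    have : (2 : ℝ) ≤ d := by exact_mod_cast hd
    linarith
  refine ⟨π / C * 2 ^ (d - 1) * (d * V / (d - 1)), by positivity, ?_⟩
  rintro ν ⟨hν, -⟩ δ hδ -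
  have hpow : δ ^ (2 * d - 2) = δ ^ (d - 1) * δ ^ (d - 1) := by
    rw [← pow_add]; congr 1; omega
  calc _ ≤ π / (C * ν) * (2 * δ) ^ (d - 1) *
        ∫ x in Metric.closedBall (0 : EuclideanSpace ℝ (Fin d)) δ, ‖x‖⁻¹ := by
        simpa only [Fintype.card_fin] using setIntegral_setIntegral_one_div_inner_sq_add_sq_le
          (ι := Fin d) (by rwa [Fintype.card_fin]) (mul_pos hC hν) hδ.le
    _ = π / C * 2 ^ (d - 1) * (d * V / (d - 1)) * δ ^ (2 * d - 2) / ν := by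
        rw [integral_inv_norm_closedBall volume (by rwa [finrank_euclideanSpace_fin]) hδ.le,
          finrank_euclideanSpace_fin, ← hVdef, hpow, mul_pow]
        field_simp
end

section
/- Let ξ ∈ Σ* and |θ| < θ₀ with θ₀ small enough. Then the distance from π(ξ,θ) = ξ + θN(ξ) to the quadric Σ = {x·y = 0} equals |ξ||θ|, and the nearest point of Σ to π(ξ,θ) is ξ. -/
/-!
For `ξ, ζ` on the quadric `ω = 0` and `u = ζ - ξ`, polarizing `ω` gives `⟪N ξ, u⟫ = -ω u`, so
`dist (ξ + θ N ξ) ζ ^ 2 = (‖ξ‖ |θ|) ^ 2 + ‖u‖ ^ 2 + 2 θ ω u`. Since `2 |ω u| ≤ ‖u‖ ^ 2`, the last two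
terms are at least `(1 - |θ|) ‖u‖ ^ 2`, which is positive for `u ≠ 0` once `|θ| < 1`.
-/

open MeasureTheory Real Set

noncomputable section

abbrev Z (d : ℕ) := EuclideanSpace ℝ (Fin d ⊕ Fin d)

def om {d : ℕ} (z : Z d) : ℝ := ∑ i : Fin d, z (Sum.inl i) * z (Sum.inr i)

def Nvec {d : ℕ} (z : Z d) : Z d := WithLp.toLp 2 (fun i : Fin d ⊕ Fin d => z i.swap)

def piMap {d : ℕ} (ξ : Z d) (θ : ℝ) : Z d := ξ + θ • Nvec ξ

open scoped RealInnerProductSpace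

namespace Quadric

variable {d : ℕ}

theorem norm_Nvec (z : Z d) : ‖Nvec z‖ = ‖z‖ := by
  simp only [EuclideanSpace.norm_eq, Nvec]
  exact congrArg _ (Equiv.sum_comp (Equiv.sumComm (Fin d) (Fin d)) fun i => ‖z i‖ ^ 2)

theorem om_add (z w : Z d) : om (z + w) = om z + om w + ⟪Nvec z, w⟫ := by
  simp only [om, Nvec, PiLp.inner_apply, RCLike.inner_apply, conj_trivial,
    Fintype.sum_sum_type, Sum.swap_inl, Sum.swap_inr, PiLp.add_apply]
  simp only [← Finset.sum_add_distrib]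
  exact Finset.sum_congr rfl fun i _ => by ring

theorem two_mul_abs_om_le (u : Z d) : 2 * |om u| ≤ ‖u‖ ^ 2 := by
  have hnorm : ‖u‖ ^ 2 = ∑ i : Fin d, (u (Sum.inl i) ^ 2 + u (Sum.inr i) ^ 2) := by
    rw [EuclideanSpace.norm_sq_eq, Fintype.sum_sum_type, ← Finset.sum_add_distrib]
    simp only [Real.norm_eq_abs, sq_abs]
  rw [hnorm, om, ← abs_two, ← abs_mul, abs_le, Finset.mul_sum, ← Finset.sum_neg_distrib]
  constructor <;> refine Finset.sum_le_sum fun i _ => ?_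
  · nlinarith [sq_nonneg (u (Sum.inl i) + u (Sum.inr i))]
  · nlinarith [sq_nonneg (u (Sum.inl i) - u (Sum.inr i))]

theorem dist_piMap_self (ξ : Z d) (θ : ℝ) : dist (piMap ξ θ) ξ = ‖ξ‖ * |θ| := by
  rw [dist_eq_norm, piMap, add_sub_cancel_left, norm_smul, norm_Nvec, Real.norm_eq_abs, mul_comm]

theorem dist_piMap_sq {ξ ζ : Z d} (hξ : om ξ = 0) (hζ : om ζ = 0) (θ : ℝ) :
    dist (piMap ξ θ) ζ ^ 2 = (‖ξ‖ * |θ|) ^ 2 + ‖ζ - ξ‖ ^ 2 + 2 * θ * om (ζ - ξ) := by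
  have hinner : ⟪Nvec ξ, ζ - ξ⟫ = -om (ζ - ξ) := by
    have h := om_add ξ (ζ - ξ)
    rw [add_sub_cancel, hζ, hξ] at h
    linarith
  have hsub : piMap ξ θ - ζ = θ • Nvec ξ - (ζ - ξ) := by
    rw [piMap]; abel
  rw [dist_eq_norm, hsub, norm_sub_sq_real, real_inner_smul_left, hinner, norm_smul, norm_Nvec,
    Real.norm_eq_abs]
  ring

theorem sq_add_le_dist_piMap_sq {ξ ζ : Z d} (hξ : om ξ = 0) (hζ : om ζ = 0) (θ : ℝ) :
    (‖ξ‖ * |θ|) ^ 2 + (1 - |θ|) * ‖ζ - ξ‖ ^ 2 ≤ dist (piMap ξ θ) ζ ^ 2 := by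
  rw [dist_piMap_sq hξ hζ]
  have hom : |2 * θ * om (ζ - ξ)| ≤ |θ| * ‖ζ - ξ‖ ^ 2 := by
    rw [mul_comm 2, mul_assoc, abs_mul, abs_mul, abs_two]
    exact mul_le_mul_of_nonneg_left (two_mul_abs_om_le _) (abs_nonneg θ)
  linarith [neg_abs_le (2 * θ * om (ζ - ξ))]

end Quadric

open Quadric in
theorem dist_to_quadric_general (d : ℕ) :
    ∃ θ₀ > (0:ℝ), ∀ ξ : Z d, om ξ = 0 → ξ ≠ 0 → ∀ θ : ℝ, |θ| < θ₀ →
      Metric.infDist (piMap ξ θ) {z : Z d | om z = 0} = ‖ξ‖ * |θ| ∧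
      dist (piMap ξ θ) ξ = ‖ξ‖ * |θ| ∧
      ∀ ζ ∈ {z : Z d | om z = 0}, dist (piMap ξ θ) ζ = ‖ξ‖ * |θ| → ζ = ξ := by
  refine ⟨1, one_pos, fun ξ hξ _ θ hθ => ?_⟩
  have hmem : ξ ∈ {z : Z d | om z = 0} := hξ
  have hlower : ∀ ζ ∈ {z : Z d | om z = 0}, ‖ξ‖ * |θ| ≤ dist (piMap ξ θ) ζ := fun ζ hζ =>
    (pow_le_pow_iff_left₀ (by positivity) dist_nonneg two_ne_zero).mp <|
      (le_add_of_nonneg_right (mul_nonneg (sub_nonneg.mpr hθ.le) (sq_nonneg _))).trans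
        (sq_add_le_dist_piMap_sq hξ hζ θ)
  refine ⟨le_antisymm ((Metric.infDist_le_dist_of_mem hmem).trans_eq (dist_piMap_self ξ θ))
    ((Metric.le_infDist ⟨ξ, hmem⟩).mpr hlower), dist_piMap_self ξ θ, fun ζ hζ hdist => ?_⟩
  have hsq : (1 - |θ|) * ‖ζ - ξ‖ ^ 2 ≤ 0 := by
    linarith [hdist ▸ sq_add_le_dist_piMap_sq hξ hζ θ]
  have hnorm : ‖ζ - ξ‖ ^ 2 = 0 :=
    le_antisymm (nonpos_of_mul_nonpos_right hsq (sub_pos.mpr hθ)) (sq_nonneg _)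
  simpa [sub_eq_zero] using hnorm

/-- there is `θ₀ > 0` such that for `ξ ∈ Σ*` and `|θ| < θ₀`, the distance from
`π(ξ,θ) = ξ + θN(ξ)` to the quadric `Σ = {x·y = 0}` equals `|ξ||θ|`, it is attained at `ξ`,
and `ξ` is the unique nearest point of `Σ`. -/
theorem dist_to_quadric (d : ℕ) (hd : 2 ≤ d) :
    ∃ θ₀ > (0:ℝ), ∀ ξ : Z d, om ξ = 0 → ξ ≠ 0 → ∀ θ : ℝ, |θ| < θ₀ →
      Metric.infDist (piMap ξ θ) {z : Z d | om z = 0} = ‖ξ‖ * |θ| ∧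
      dist (piMap ξ θ) ξ = ‖ξ‖ * |θ| ∧
      ∀ ζ ∈ {z : Z d | om z = 0}, dist (piMap ξ θ) ζ = ‖ξ‖ * |θ| → ζ = ξ :=
  dist_to_quadric_general d
end
end
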